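/- arXiv:math/9904037 — 2 statements merged into one kernel-verified Lean document; each statement's English description precedes it below -/
import Mathlib

section
/- For every integer n ≥ 3, the geometric knot space Geo(n) of embedded n-gons is an open and dense subset of the product space (ℝ³)^n. -/
open Set

noncomputable section

abbrev E3 : Type := EuclideanSpace ℝ (Fin 3)

abbrev PolySpace (n : ℕ) : Type := Fin n → E3

/-- The `i`-th edge of the polygon with vertex list `v` is the closed segment from
`v i` to `v (i+1)` (indices mod `n`). -/
def polyEdge {n : ℕ} [NeZero n] (v : PolySpace n) (i : Fin n) : Set E3 :=
  segment ℝ (v i) (v (i + 1))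

/-- A polygon is embedded if consecutive vertices are distinct, adjacent edges meet
exactly in their common vertex, and non-adjacent edges are disjoint. -/
def IsEmbeddedPolygon {n : ℕ} [NeZero n] (v : PolySpace n) : Prop :=
  (∀ i, v i ≠ v (i + 1)) ∧
  (∀ i, polyEdge v i ∩ polyEdge v (i + 1) = {v (i + 1)}) ∧
  (∀ i j, j ≠ i → j ≠ i + 1 → j + 1 ≠ i → polyEdge v i ∩ polyEdge v j = ∅)

/-- The geometric knot space `Geo n` of embedded `n`-gons, a subset of the product
space `(ℝ³)ⁿ` (with the subspace topology). -/
def Geo (n : ℕ) [NeZero n] : Set (PolySpace n) := {v | IsEmbeddedPolygon v}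

/-! ### Auxiliary lemmas -/

section Aux

open Submodule

theorem GeoAux.fin_one_ne_zero (n : ℕ) [NeZero n] (hn : 3 ≤ n) : (1 : Fin n) ≠ 0 := by
  rw [Ne, Fin.one_eq_zero_iff]; omega

theorem GeoAux.fin_two_ne_zero (n : ℕ) [NeZero n] (hn : 3 ≤ n) : (2 : Fin n) ≠ 0 := by
  intro h
  have h2 : ((2 : Fin n) : ℕ) = 2 % n := rfl
  rw [h, Fin.val_zero, Nat.mod_eq_of_lt (by omega)] at h2
  omega

theorem GeoAux.add_one_ne {n : ℕ} [NeZero n] (hn : 3 ≤ n) (i : Fin n) : i + 1 ≠ i := by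
  intro h
  exact GeoAux.fin_one_ne_zero n hn (add_left_cancel (a := i) (by simpa using h))

theorem GeoAux.add_two_ne {n : ℕ} [NeZero n] (hn : 3 ≤ n) (i : Fin n) : i + 2 ≠ i := by
  intro h
  exact GeoAux.fin_two_ne_zero n hn (add_left_cancel (a := i) (by simpa using h))

theorem GeoAux.add_one_add_one {n : ℕ} [NeZero n] (i : Fin n) : i + 1 + 1 = i + 2 := by
  rw [add_assoc]; congr 1; exact Fin.ext (by simp [Fin.val_add])

theorem GeoAux.span_ne_top (m : ℕ) (hm : m < 3) (f : Fin m → E3) :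
    span ℝ (Set.range f) ≠ ⊤ := by
  intro h
  have := finrank_le_of_span_eq_top h
  rw [finrank_euclideanSpace_fin, Fintype.card_fin] at this
  omega

theorem GeoAux.pert (a : E3) (s : Submodule ℝ E3) (hs : s ≠ ⊤) (y : E3) (δ : ℝ) (hδ : 0 < δ) :
    ∃ y' : E3, dist y' y < δ ∧ y' - a ∉ s := by
  obtain ⟨u, hu⟩ : ∃ u : E3, u ∉ s := by
    by_contra hc
    push_neg at hc
    exact hs (Submodule.eq_top_iff'.2 hc)
  have hu0 : u ≠ 0 := fun h => hu (h ▸ s.zero_mem)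
  have hun : 0 < ‖u‖ := norm_pos_iff.2 hu0
  by_cases hy : y - a ∈ s
  · refine ⟨y + (δ / (2 * ‖u‖)) • u, ?_, ?_⟩
    · rw [dist_eq_norm]
      simp only [add_sub_cancel_left]
      rw [norm_smul, Real.norm_eq_abs, abs_of_pos (by positivity)]
      rw [div_mul_eq_mul_div, div_lt_iff₀ (by positivity)]
      nlinarith
    · intro hmem
      have hc0 : (δ / (2 * ‖u‖)) ≠ 0 := by positivity
      have hsm : (δ / (2 * ‖u‖)) • u ∈ s := by
        have he : y + (δ / (2 * ‖u‖)) • u - a - (y - a) = (δ / (2 * ‖u‖)) • u := by abel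
        simpa [he] using s.sub_mem hmem hy
      have h2 : ((δ / (2 * ‖u‖))⁻¹ * (δ / (2 * ‖u‖))) • u ∈ s := by
        rw [mul_smul]; exact s.smul_mem _ hsm
      rw [inv_mul_cancel₀ hc0, one_smul] at h2
      exact hu h2
  · exact ⟨y, by simpa using hδ, hy⟩

/-- Tuples whose three difference vectors at four fixed distinct indices are linearly
independent form a dense set. -/
theorem GeoAux.dense4 {n : ℕ} [NeZero n] (k0 k1 k2 k3 : Fin n)
    (h10 : k1 ≠ k0) (h20 : k2 ≠ k0) (h30 : k3 ≠ k0)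
    (h21 : k2 ≠ k1) (h31 : k3 ≠ k1) (h32 : k3 ≠ k2) :
    Dense {v : PolySpace n | LinearIndependent ℝ ![v k1 - v k0, v k2 - v k0, v k3 - v k0]} := by
  rw [Metric.dense_iff]
  intro v r hr
  set a := v k0 with ha
  obtain ⟨d', hd, hD⟩ := GeoAux.pert a (span ℝ (Set.range (![] : Fin 0 → E3)))
    (GeoAux.span_ne_top 0 (by omega) _) (v k3) r hr
  obtain ⟨c', hc, hC⟩ := GeoAux.pert a (span ℝ (Set.range ![d' - a]))
    (GeoAux.span_ne_top 1 (by omega) _) (v k2) r hr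
  obtain ⟨b', hb, hB⟩ := GeoAux.pert a (span ℝ (Set.range ![c' - a, d' - a]))
    (GeoAux.span_ne_top 2 (by omega) _) (v k1) r hr
  classical
  set w : PolySpace n := fun k => if k = k1 then b' else if k = k2 then c'
    else if k = k3 then d' else v k with hw
  have hw0 : w k0 = v k0 := by simp [hw, h10.symm, h20.symm, h30.symm]
  have hw1 : w k1 = b' := by simp [hw]
  have hw2 : w k2 = c' := by simp [hw, h21]
  have hw3 : w k3 = d' := by simp [hw, h31, h32]
  refine ⟨w, ?_, ?_⟩
  · rw [Metric.mem_ball, dist_pi_lt_iff hr]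
    intro k
    by_cases e1 : k = k1
    · subst e1; rwa [hw1]
    by_cases e2 : k = k2
    · subst e2; rwa [hw2]
    by_cases e3 : k = k3
    · subst e3; rwa [hw3]
    · simp [hw, e1, e2, e3, hr]
  · have hli : LinearIndependent ℝ ![b' - a, c' - a, d' - a] := by
      refine linearIndependent_fin_cons.2 ⟨?_, hB⟩
      refine linearIndependent_fin_cons.2 ⟨?_, hC⟩
      refine linearIndependent_fin_cons.2 ⟨?_, hD⟩
      exact linearIndependent_empty_type
    show LinearIndependent ℝ ![w k1 - w k0, w k2 - w k0, w k3 - w k0]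
    rw [hw0, hw1, hw2, hw3, ← ha]
    exact hli

/-- Tuples whose two difference vectors at three fixed distinct indices are linearly
independent form a dense set. -/
theorem GeoAux.dense3 {n : ℕ} [NeZero n] (k0 k1 k2 : Fin n)
    (h10 : k1 ≠ k0) (h20 : k2 ≠ k0) (h21 : k2 ≠ k1) :
    Dense {v : PolySpace n | LinearIndependent ℝ ![v k1 - v k0, v k2 - v k0]} := by
  rw [Metric.dense_iff]
  intro v r hr
  set a := v k0 with ha
  obtain ⟨c', hc, hC⟩ := GeoAux.pert a (span ℝ (Set.range (![] : Fin 0 → E3)))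
    (GeoAux.span_ne_top 0 (by omega) _) (v k2) r hr
  obtain ⟨b', hb, hB⟩ := GeoAux.pert a (span ℝ (Set.range ![c' - a]))
    (GeoAux.span_ne_top 1 (by omega) _) (v k1) r hr
  classical
  set w : PolySpace n := fun k => if k = k1 then b' else if k = k2 then c' else v k with hw
  have hw0 : w k0 = v k0 := by simp [hw, h10.symm, h20.symm]
  have hw1 : w k1 = b' := by simp [hw]
  have hw2 : w k2 = c' := by simp [hw, h21]
  refine ⟨w, ?_, ?_⟩
  · rw [Metric.mem_ball, dist_pi_lt_iff hr]
    intro k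
    by_cases e1 : k = k1
    · subst e1; rwa [hw1]
    by_cases e2 : k = k2
    · subst e2; rwa [hw2]
    · simp [hw, e1, e2, hr]
  · have hli : LinearIndependent ℝ ![b' - a, c' - a] := by
      refine linearIndependent_fin_cons.2 ⟨?_, hB⟩
      refine linearIndependent_fin_cons.2 ⟨?_, hC⟩
      exact linearIndependent_empty_type
    show LinearIndependent ℝ ![w k1 - w k0, w k2 - w k0]
    rw [hw0, hw1, hw2, ← ha]
    exact hli

/-- Interior of a union with a closed nowhere dense set. -/
theorem GeoAux.interior_union_empty {X : Type*} [TopologicalSpace X] {s t : Set X}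
    (hs : IsClosed s) (h1 : interior s = ∅) (h2 : interior t = ∅) :
    interior (s ∪ t) = ∅ := by
  have key : interior (s ∪ t) ∩ sᶜ ⊆ interior t := by
    apply interior_maximal
    · intro x hx
      rcases interior_subset hx.1 with h | h
      · exact absurd h hx.2
      · exact h
    · exact isOpen_interior.inter hs.isOpen_compl
  have h3 : interior (s ∪ t) ⊆ s := by
    intro x hx
    by_contra hxs
    have := key ⟨hx, hxs⟩
    rw [h2] at this
    exact this
  have h4 : interior (s ∪ t) ⊆ interior s := interior_maximal h3 isOpen_interior
  rw [h1] at h4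
  exact subset_empty_iff.mp h4

theorem GeoAux.interior_iUnion_empty {ι : Type*} [Fintype ι] {X : Type*} [TopologicalSpace X]
    (f : ι → Set X) (hc : ∀ i, IsClosed (f i)) (hi : ∀ i, interior (f i) = ∅) :
    interior (⋃ i, f i) = ∅ := by
  classical
  have key : ∀ F : Finset ι, interior (⋃ i ∈ F, f i) = ∅ := by
    intro F
    induction F using Finset.induction_on with
    | empty => simp
    | insert _ _ hnotmem ih =>
      rw [Finset.set_biUnion_insert]
      exact GeoAux.interior_union_empty (hc _) (hi _) ih
  have : (⋃ i, f i) = ⋃ i ∈ (Finset.univ : Finset ι), f i := by simp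
  rw [this]
  exact key _

/-- Projection of a closed set with compact first-coordinate support is closed. -/
theorem GeoAux.isClosed_proj {X Y : Type*} [TopologicalSpace X] [TopologicalSpace Y]
    {K : Set X} (hK : IsCompact K) {S : Set (X × Y)} (hS : IsClosed S)
    (hSK : ∀ p ∈ S, p.1 ∈ K) : IsClosed (Prod.snd '' S) := by
  haveI : CompactSpace K := isCompact_iff_compactSpace.mp hK
  have himg : Prod.snd '' S = Prod.snd '' {q : K × Y | ((q.1 : X), q.2) ∈ S} := by
    ext y
    constructor
    · rintro ⟨⟨x, y⟩, hxy, rfl⟩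
      exact ⟨⟨⟨x, hSK _ hxy⟩, y⟩, hxy, rfl⟩
    · rintro ⟨⟨x, y⟩, hxy, rfl⟩
      exact ⟨((x : X), y), hxy, rfl⟩
  rw [himg]
  exact isClosedMap_snd_of_compactSpace _
    (hS.preimage ((continuous_subtype_val.comp continuous_fst).prodMk continuous_snd))

theorem GeoAux.mem_seg_param {p q z : E3} :
    z ∈ segment ℝ p q ↔ ∃ t ∈ Icc (0:ℝ) 1, p + t • (q - p) = z := by
  rw [segment_eq_image']
  constructor
  · rintro ⟨t, ht, rfl⟩; exact ⟨t, ht, rfl⟩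
  · rintro ⟨t, ht, rfl⟩; exact ⟨t, ht, rfl⟩

theorem GeoAux.mem_seg_param' {p q z : E3} :
    z ∈ segment ℝ p q ↔ ∃ t ∈ Icc (0:ℝ) 1, q + t • (p - q) = z := by
  rw [segment_symm, GeoAux.mem_seg_param]

end Aux

/-! ### The bad sets used for the openness proof -/

/-- Failure of the adjacent-edge condition at `i`, in parametrized closed form. -/
def Dbad (n : ℕ) [NeZero n] (i : Fin n) : Set (PolySpace n) :=
  {v | ∃ p : ℝ × ℝ, (p.1 ∈ Icc (0:ℝ) 1 ∧ p.2 ∈ Icc (0:ℝ) 1 ∧ (p.1 = 1 ∨ p.2 = 1)) ∧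
    p.1 • (v i - v (i + 1)) = p.2 • (v (i + 2) - v (i + 1))}

/-- Intersection of the edges `i` and `j`, in parametrized closed form. -/
def Cbad (n : ℕ) [NeZero n] (i j : Fin n) : Set (PolySpace n) :=
  {v | ∃ p : ℝ × ℝ, (p.1 ∈ Icc (0:ℝ) 1 ∧ p.2 ∈ Icc (0:ℝ) 1) ∧
    v i + p.1 • (v (i + 1) - v i) = v j + p.2 • (v (j + 1) - v j)}

theorem isClosed_Dbad (n : ℕ) [NeZero n] (i : Fin n) : IsClosed (Dbad n i) := by
  have hK : IsCompact ((Icc (0:ℝ) 1 ×ˢ Icc (0:ℝ) 1) ∩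
      ({p : ℝ × ℝ | p.1 = 1} ∪ {p : ℝ × ℝ | p.2 = 1})) := by
    apply (isCompact_Icc.prod isCompact_Icc).inter_right
    exact (isClosed_eq continuous_fst continuous_const).union
      (isClosed_eq continuous_snd continuous_const)
  have hS : IsClosed {q : (ℝ × ℝ) × PolySpace n |
      q.1 ∈ ((Icc (0:ℝ) 1 ×ˢ Icc (0:ℝ) 1) ∩
        ({p : ℝ × ℝ | p.1 = 1} ∪ {p : ℝ × ℝ | p.2 = 1})) ∧
      q.1.1 • (q.2 i - q.2 (i + 1)) = q.1.2 • (q.2 (i + 2) - q.2 (i + 1))} := by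
    apply IsClosed.inter
    · exact (hK.isClosed).preimage continuous_fst
    · apply isClosed_eq
      · exact (continuous_fst.fst).smul
          (((continuous_apply i).comp continuous_snd).sub
            ((continuous_apply (i + 1)).comp continuous_snd))
      · exact (continuous_fst.snd).smul
          (((continuous_apply (i + 2)).comp continuous_snd).sub
            ((continuous_apply (i + 1)).comp continuous_snd))
  have himg : Dbad n i = Prod.snd '' {q : (ℝ × ℝ) × PolySpace n |
      q.1 ∈ ((Icc (0:ℝ) 1 ×ˢ Icc (0:ℝ) 1) ∩
        ({p : ℝ × ℝ | p.1 = 1} ∪ {p : ℝ × ℝ | p.2 = 1})) ∧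
      q.1.1 • (q.2 i - q.2 (i + 1)) = q.1.2 • (q.2 (i + 2) - q.2 (i + 1))} := by
    ext v
    constructor
    · rintro ⟨p, ⟨h1, h2, h3⟩, h4⟩
      exact ⟨(p, v), ⟨⟨⟨h1, h2⟩, by simpa using h3⟩, h4⟩, rfl⟩
    · rintro ⟨⟨p, v⟩, ⟨⟨⟨h1, h2⟩, h3⟩, h4⟩, rfl⟩
      exact ⟨p, ⟨h1, h2, by simpa using h3⟩, h4⟩
  rw [himg]
  exact GeoAux.isClosed_proj hK hS (fun p hp => hp.1)

theorem isClosed_Cbad (n : ℕ) [NeZero n] (i j : Fin n) : IsClosed (Cbad n i j) := by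
  have hK : IsCompact (Icc (0:ℝ) 1 ×ˢ Icc (0:ℝ) 1) := isCompact_Icc.prod isCompact_Icc
  have hS : IsClosed {q : (ℝ × ℝ) × PolySpace n |
      q.1 ∈ Icc (0:ℝ) 1 ×ˢ Icc (0:ℝ) 1 ∧
      q.2 i + q.1.1 • (q.2 (i + 1) - q.2 i) = q.2 j + q.1.2 • (q.2 (j + 1) - q.2 j)} := by
    apply IsClosed.inter
    · exact (hK.isClosed).preimage continuous_fst
    · apply isClosed_eq
      · exact ((continuous_apply i).comp continuous_snd).add
          ((continuous_fst.fst).smul (((continuous_apply (i + 1)).comp continuous_snd).sub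
            ((continuous_apply i).comp continuous_snd)))
      · exact ((continuous_apply j).comp continuous_snd).add
          ((continuous_fst.snd).smul (((continuous_apply (j + 1)).comp continuous_snd).sub
            ((continuous_apply j).comp continuous_snd)))
  have himg : Cbad n i j = Prod.snd '' {q : (ℝ × ℝ) × PolySpace n |
      q.1 ∈ Icc (0:ℝ) 1 ×ˢ Icc (0:ℝ) 1 ∧
      q.2 i + q.1.1 • (q.2 (i + 1) - q.2 i) = q.2 j + q.1.2 • (q.2 (j + 1) - q.2 j)} := by
    ext v
    constructor
    · rintro ⟨p, ⟨h1, h2⟩, h4⟩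
      exact ⟨(p, v), ⟨⟨h1, h2⟩, h4⟩, rfl⟩
    · rintro ⟨⟨p, v⟩, ⟨⟨h1, h2⟩, h4⟩, rfl⟩
      exact ⟨p, ⟨h1, h2⟩, h4⟩
  rw [himg]
  exact GeoAux.isClosed_proj hK hS (fun p hp => hp.1)

/-! ### Characterization of the embeddedness conditions -/

theorem adj_iff {n : ℕ} [NeZero n] (v : PolySpace n) (i : Fin n)
    (ha : v i ≠ v (i + 1)) (hc : v (i + 2) ≠ v (i + 1)) :
    polyEdge v i ∩ polyEdge v (i + 1) = {v (i + 1)} ↔ v ∉ Dbad n i := by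
  have e2 : polyEdge v (i + 1) = segment ℝ (v (i + 1)) (v (i + 2)) := by
    rw [polyEdge, GeoAux.add_one_add_one]
  constructor
  · -- contrapositive: v ∈ Dbad → intersection ≠ {v (i+1)}
    intro hinter
    rintro ⟨⟨t, u⟩, ⟨ht, hu, h1⟩, heq⟩
    simp only at heq
    rcases h1 with h1 | h1
    · -- t = 1 : the point v i lies on both edges
      subst h1
      rw [one_smul] at heq
      have hx1 : v i ∈ polyEdge v i := left_mem_segment ℝ _ _
      have hx2 : v i ∈ polyEdge v (i + 1) := by
        rw [e2, GeoAux.mem_seg_param]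
        exact ⟨u, hu, by rw [← heq]; abel⟩
      have : v i ∈ ({v (i + 1)} : Set E3) := hinter ▸ ⟨hx1, hx2⟩
      exact ha this
    · -- u = 1 : the point v (i+2) lies on both edges
      subst h1
      rw [one_smul] at heq
      have hx2 : v (i + 2) ∈ polyEdge v (i + 1) := by
        rw [e2]; exact right_mem_segment ℝ _ _
      have hx1 : v (i + 2) ∈ polyEdge v i := by
        rw [polyEdge, GeoAux.mem_seg_param']
        exact ⟨t, ht, by rw [heq]; abel⟩
      have : v (i + 2) ∈ ({v (i + 1)} : Set E3) := hinter ▸ ⟨hx1, hx2⟩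
      exact hc this
  · intro hnd
    apply Set.eq_singleton_iff_unique_mem.2
    constructor
    · exact ⟨right_mem_segment ℝ _ _, e2 ▸ left_mem_segment ℝ _ _⟩
    · rintro x ⟨hx1, hx2⟩
      rw [polyEdge, GeoAux.mem_seg_param'] at hx1
      rw [e2, GeoAux.mem_seg_param] at hx2
      obtain ⟨t, ht, hxt⟩ := hx1
      obtain ⟨u, hu, hxu⟩ := hx2
      have heq : t • (v i - v (i + 1)) = u • (v (i + 2) - v (i + 1)) := by
        have := hxt.trans hxu.symm
        exact add_left_cancel this
      rcases le_total t u with hle | hle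
      · rcases eq_or_lt_of_le hu.1 with hu0 | hu0
        · have ht0 : t = 0 := le_antisymm (hle.trans hu0.ge) ht.1
          rw [← hxt, ht0, zero_smul, add_zero]
        · exfalso
          apply hnd
          refine ⟨(u⁻¹ * t, 1), ⟨⟨mul_nonneg (inv_nonneg.2 hu0.le) ht.1, ?_⟩,
            ⟨zero_le_one, le_refl 1⟩, Or.inr rfl⟩, ?_⟩
          · rw [← inv_mul_cancel₀ (ne_of_gt hu0)]
            exact mul_le_mul_of_nonneg_left hle (inv_nonneg.2 hu0.le)
          · simp only [one_smul]
            rw [mul_smul]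
            rw [heq, smul_smul, inv_mul_cancel₀ (ne_of_gt hu0), one_smul]
      · rcases eq_or_lt_of_le ht.1 with ht0 | ht0
        · have hu0 : u = 0 := le_antisymm (hle.trans ht0.ge) hu.1
          rw [← hxu, hu0, zero_smul, add_zero]
        · exfalso
          apply hnd
          refine ⟨(1, t⁻¹ * u), ⟨⟨zero_le_one, le_refl 1⟩,
            ⟨mul_nonneg (inv_nonneg.2 ht0.le) hu.1, ?_⟩, Or.inl rfl⟩, ?_⟩
          · rw [← inv_mul_cancel₀ (ne_of_gt ht0)]
            exact mul_le_mul_of_nonneg_left hle (inv_nonneg.2 ht0.le)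
          · simp only [one_smul]
            rw [mul_smul, ← heq, smul_smul, inv_mul_cancel₀ (ne_of_gt ht0), one_smul]

theorem nonadj_iff {n : ℕ} [NeZero n] (v : PolySpace n) (i j : Fin n) :
    polyEdge v i ∩ polyEdge v j = ∅ ↔ v ∉ Cbad n i j := by
  constructor
  · intro hinter
    rintro ⟨⟨t, u⟩, ⟨ht, hu⟩, heq⟩
    simp only at heq
    have hx1 : v i + t • (v (i + 1) - v i) ∈ polyEdge v i := by
      rw [polyEdge, GeoAux.mem_seg_param]; exact ⟨t, ht, rfl⟩
    have hx2 : v i + t • (v (i + 1) - v i) ∈ polyEdge v j := by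
      rw [polyEdge, GeoAux.mem_seg_param]; exact ⟨u, hu, heq.symm⟩
    have : v i + t • (v (i + 1) - v i) ∈ (∅ : Set E3) := hinter ▸ ⟨hx1, hx2⟩
    exact this
  · intro hnc
    rw [eq_empty_iff_forall_notMem]
    rintro x ⟨hx1, hx2⟩
    rw [polyEdge, GeoAux.mem_seg_param] at hx1 hx2
    obtain ⟨t, ht, hxt⟩ := hx1
    obtain ⟨u, hu, hxu⟩ := hx2
    exact hnc ⟨(t, u), ⟨ht, hu⟩, hxt.trans hxu.symm⟩

/-- Characterization of `Geo n` via the closed bad sets. -/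
theorem geo_eq (n : ℕ) [NeZero n] (hn : 3 ≤ n) :
    Geo n = (⋂ i, {v : PolySpace n | v i ≠ v (i + 1)}) ∩
      ((⋂ i, (Dbad n i)ᶜ) ∩
       (⋂ i, ⋂ j, {v : PolySpace n | j ≠ i → j ≠ i + 1 → j + 1 ≠ i → v ∉ Cbad n i j})) := by
  ext v
  simp only [Geo, IsEmbeddedPolygon, mem_setOf_eq, mem_inter_iff, mem_iInter, mem_compl_iff]
  constructor
  · rintro ⟨h1, h2, h3⟩
    refine ⟨h1, fun i => ?_, fun i j hj1 hj2 hj3 => ?_⟩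
    · exact (adj_iff v i (h1 i) (by
        rw [← GeoAux.add_one_add_one]; exact (h1 (i + 1)).symm)).1 (h2 i)
    · exact (nonadj_iff v i j).1 (h3 i j hj1 hj2 hj3)
  · rintro ⟨h1, h2, h3⟩
    refine ⟨h1, fun i => ?_, fun i j hj1 hj2 hj3 => ?_⟩
    · exact (adj_iff v i (h1 i) (by
        rw [← GeoAux.add_one_add_one]; exact (h1 (i + 1)).symm)).2 (h2 i)
    · exact (nonadj_iff v i j).2 (h3 i j hj1 hj2 hj3)

theorem geo_isOpen (n : ℕ) [NeZero n] (hn : 3 ≤ n) : IsOpen (Geo n) := by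
  rw [geo_eq n hn]
  apply IsOpen.inter
  · apply isOpen_iInter_of_finite
    intro i
    exact (isClosed_eq (continuous_apply i) (continuous_apply (i + 1))).isOpen_compl
  apply IsOpen.inter
  · exact isOpen_iInter_of_finite fun i => (isClosed_Dbad n i).isOpen_compl
  · apply isOpen_iInter_of_finite
    intro i
    apply isOpen_iInter_of_finite
    intro j
    classical
    by_cases h : j ≠ i ∧ j ≠ i + 1 ∧ j + 1 ≠ i
    · have : {v : PolySpace n | j ≠ i → j ≠ i + 1 → j + 1 ≠ i → v ∉ Cbad n i j}
          = (Cbad n i j)ᶜ := by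
        ext v; simp [h.1, h.2.1, h.2.2]
      rw [this]
      exact (isClosed_Cbad n i j).isOpen_compl
    · have : {v : PolySpace n | j ≠ i → j ≠ i + 1 → j + 1 ≠ i → v ∉ Cbad n i j} = univ := by
        apply eq_univ_of_forall
        intro v hj1 hj2 hj3
        exact absurd ⟨hj1, hj2, hj3⟩ h
      rw [this]
      exact isOpen_univ

/-! ### Density -/

/-- The general-position conditions imply embeddedness. -/
theorem embedded_of_general_position {n : ℕ} [NeZero n] (v : PolySpace n)
    (hT : ∀ i : Fin n, LinearIndependent ℝ ![v (i + 1) - v i, v (i + 2) - v i])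
    (hQ : ∀ i j : Fin n, j ≠ i → j ≠ i + 1 → j + 1 ≠ i →
      LinearIndependent ℝ ![v (i + 1) - v i, v j - v i, v (j + 1) - v i]) :
    IsEmbeddedPolygon v := by
  have h1 : ∀ i : Fin n, v i ≠ v (i + 1) := by
    intro i
    have := (hT i).ne_zero 0
    simp only [Matrix.cons_val_zero] at this
    exact fun h => this (by rw [h, sub_self])
  refine ⟨h1, fun i => ?_, fun i j hj1 hj2 hj3 => ?_⟩
  · -- adjacent edges
    have e2 : polyEdge v (i + 1) = segment ℝ (v (i + 1)) (v (i + 2)) := by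
      rw [polyEdge, GeoAux.add_one_add_one]
    apply Set.eq_singleton_iff_unique_mem.2
    constructor
    · exact ⟨right_mem_segment ℝ _ _, e2 ▸ left_mem_segment ℝ _ _⟩
    · rintro x ⟨hx1, hx2⟩
      rw [polyEdge, GeoAux.mem_seg_param'] at hx1
      rw [e2, GeoAux.mem_seg_param] at hx2
      obtain ⟨t, ht, hxt⟩ := hx1
      obtain ⟨u, hu, hxu⟩ := hx2
      have heq : t • (v i - v (i + 1)) = u • (v (i + 2) - v (i + 1)) :=
        add_left_cancel (hxt.trans hxu.symm)
      have hz : (u - t) • (v (i + 1) - v i) + (-u) • (v (i + 2) - v i) = 0 := by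
        have h' : t • (v i - v (i + 1)) - u • (v (i + 2) - v (i + 1)) = 0 := by
          rw [heq, sub_self]
        rw [← h']
        module
      have hcoef := Fintype.linearIndependent_iff.1 (hT i) ![u - t, -u] (by
        rw [Fin.sum_univ_two]
        simpa using hz)
      have hu0 : u = 0 := by have := hcoef 1; simpa using this
      rw [← hxu, hu0, zero_smul, add_zero]
  · -- non-adjacent edges
    rw [eq_empty_iff_forall_notMem]
    rintro x ⟨hx1, hx2⟩
    rw [polyEdge, GeoAux.mem_seg_param] at hx1 hx2
    obtain ⟨t, ht, hxt⟩ := hx1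
    obtain ⟨u, hu, hxu⟩ := hx2
    have heq : v i + t • (v (i + 1) - v i) = v j + u • (v (j + 1) - v j) :=
      hxt.trans hxu.symm
    have hz : t • (v (i + 1) - v i) + (u - 1) • (v j - v i) + (-u) • (v (j + 1) - v i) = 0 := by
      have h' : (v i + t • (v (i + 1) - v i)) - (v j + u • (v (j + 1) - v j)) = 0 := by
        rw [heq, sub_self]
      rw [← h']
      module
    have hcoef := Fintype.linearIndependent_iff.1 (hQ i j hj1 hj2 hj3) ![t, u - 1, -u] (by
      rw [Fin.sum_univ_three]
      simpa using hz)
    have hu1 : u = 1 := by have := hcoef 1; simp at this; linarith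
    have hu0 : u = 0 := by have := hcoef 2; simpa using this
    rw [hu1] at hu0
    exact one_ne_zero hu0

theorem geo_dense (n : ℕ) [NeZero n] (hn : 3 ≤ n) : Dense (Geo n) := by
  classical
  -- family of closed nowhere dense bad sets
  set F : (Fin n ⊕ Fin n × Fin n) → Set (PolySpace n) := fun k =>
    match k with
    | Sum.inl i => {v : PolySpace n | LinearIndependent ℝ ![v (i + 1) - v i, v (i + 2) - v i]}ᶜ
    | Sum.inr (i, j) =>
        if j ≠ i ∧ j ≠ i + 1 ∧ j + 1 ≠ i then
          {v : PolySpace n |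
            LinearIndependent ℝ ![v (i + 1) - v i, v j - v i, v (j + 1) - v i]}ᶜ
        else ∅
    with hF
  have hcont2 : ∀ i k : Fin n, Continuous fun v : PolySpace n => v i - v k :=
    fun i k => (continuous_apply i).sub (continuous_apply k)
  have hopen3 : ∀ i j k : Fin n,
      IsOpen {v : PolySpace n | LinearIndependent ℝ ![v i - v k, v j - v k]} := by
    intro i j k
    have : Continuous fun v : PolySpace n => (![v i - v k, v j - v k] : Fin 2 → E3) := by
      apply continuous_pi
      intro m
      fin_cases m <;> simpa using hcont2 _ _
    exact isOpen_setOf_linearIndependent.preimage this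
  have hopen4 : ∀ i j l k : Fin n,
      IsOpen {v : PolySpace n | LinearIndependent ℝ ![v i - v k, v j - v k, v l - v k]} := by
    intro i j l k
    have : Continuous fun v : PolySpace n =>
        (![v i - v k, v j - v k, v l - v k] : Fin 3 → E3) := by
      apply continuous_pi
      intro m
      fin_cases m <;> simpa using hcont2 _ _
    exact isOpen_setOf_linearIndependent.preimage this
  have hclosed : ∀ k, IsClosed (F k) := by
    rintro (i | ⟨i, j⟩)
    · exact (hopen3 (i + 1) (i + 2) i).isClosed_compl
    · simp only [hF]
      split
      · exact (hopen4 (i + 1) j (j + 1) i).isClosed_compl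
      · exact isClosed_empty
  have hint : ∀ k, interior (F k) = ∅ := by
    rintro (i | ⟨i, j⟩)
    · have hd : Dense {v : PolySpace n |
          LinearIndependent ℝ ![v (i + 1) - v i, v (i + 2) - v i]} :=
        GeoAux.dense3 i (i + 1) (i + 2) (GeoAux.add_one_ne hn i) (GeoAux.add_two_ne hn i)
          (by
            intro h
            apply GeoAux.fin_one_ne_zero n hn
            have : i + 1 + 1 = i + 1 + 0 := by
              rw [add_zero, GeoAux.add_one_add_one]; exact h
            exact add_left_cancel this)
      show interior ({v : PolySpace n |
          LinearIndependent ℝ ![v (i + 1) - v i, v (i + 2) - v i]}ᶜ) = ∅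
      rw [interior_compl, hd.closure_eq, compl_univ]
    · simp only [hF]
      split
      · rename_i h
        obtain ⟨hj1, hj2, hj3⟩ := h
        have hd : Dense {v : PolySpace n |
            LinearIndependent ℝ ![v (i + 1) - v i, v j - v i, v (j + 1) - v i]} :=
          GeoAux.dense4 i (i + 1) j (j + 1) (GeoAux.add_one_ne hn i) hj1 hj3 hj2
            (by
              intro h
              exact hj1 (add_right_cancel h))
            (GeoAux.add_one_ne hn j)
        rw [interior_compl, hd.closure_eq, compl_univ]
      · simp
  have hsub : (⋃ k, F k)ᶜ ⊆ Geo n := by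
    intro v hv
    simp only [mem_compl_iff, mem_iUnion, not_exists] at hv
    apply embedded_of_general_position
    · intro i
      have := hv (Sum.inl i)
      simpa [hF] using this
    · intro i j hj1 hj2 hj3
      have := hv (Sum.inr (i, j))
      simp only [hF] at this
      rw [if_pos (show j ≠ i ∧ j ≠ i + 1 ∧ j + 1 ≠ i from ⟨hj1, hj2, hj3⟩)] at this
      simpa using this
  have hdense : Dense ((⋃ k, F k)ᶜ) := by
    rw [← interior_eq_empty_iff_dense_compl]
    exact GeoAux.interior_iUnion_empty F hclosed hint
  exact hdense.mono hsub

/-- For every integer `n ≥ 3`, the geometric knot space `Geo n` of embedded `n`-gons is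
an open and dense subset of the product space `(ℝ³)ⁿ`. -/
theorem geo_isOpen_and_dense (n : ℕ) [NeZero n] (hn : 3 ≤ n) :
    IsOpen (Geo n) ∧ Dense (Geo n) := by
  exact ⟨geo_isOpen n hn, geo_dense n hn⟩
end
end

section
/- For every n ≥ 3, the point (1, 1, …, 1) ∈ ℝ^n is a regular value of the edge-length map on Geo(n): for every embedded n-gon v all of whose edges have length 1 (‖v(i+1) − v i‖ = 1 for all i, indices mod n), the Fréchet derivative at v of the map f : (EuclideanSpace ℝ (Fin 3))^n → ℝ^n sending v to the n-tuple of edge lengths (‖v(i+1) − v i‖)_{i} is a surjective linear map. -/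
open Set

noncomputable section

lemma hasFDerivAt_norm_of_unit {G : Type*} [NormedAddCommGroup G] [NormedSpace ℝ G]
    {f : G → E3} {f' : G →L[ℝ] E3} {x : G} (hf : HasFDerivAt f f' x) (h1 : ‖f x‖ = 1) :
    HasFDerivAt (fun y => ‖f y‖) ((innerSL ℝ (f x)).comp f') x := by
  have h2 := hf.norm_sq.sqrt (x := x) (by rw [h1]; norm_num)
  have h3 : (fun y => Real.sqrt (‖f y‖ ^ 2)) = fun y => ‖f y‖ := by
    funext y; exact Real.sqrt_sq (norm_nonneg _)
  rw [h3] at h2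
  convert h2 using 1
  ext u
  simp [h1, real_inner_smul_left]

/-- `(1, …, 1)` is a regular value of the edge-length map: at every embedded `n`-gon all
of whose edges have unit length, the Fréchet derivative of the map sending a polygon to
its `n`-tuple of edge lengths is surjective. -/
theorem edge_length_map_regular_value (n : ℕ) [NeZero n] (hn : 3 ≤ n) (v : PolySpace n)
    (hv : v ∈ Geo n) (hunit : ∀ i, ‖v (i + 1) - v i‖ = 1) :
    Function.Surjective
      (fderiv ℝ (fun w : PolySpace n => fun i : Fin n => ‖w (i + 1) - w i‖) v) := by
  classical
  set e : Fin n → E3 := fun i => v (i + 1) - v i with he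
  have hunit' : ∀ i, ‖e i‖ = 1 := fun i => hunit i
  have hne : ∀ i, e i ≠ 0 := by
    intro i h
    have := hunit' i
    rw [h, norm_zero] at this
    norm_num at this
  -- the derivative
  set L : ∀ _ : Fin n, PolySpace n →L[ℝ] E3 :=
    fun i => (ContinuousLinearMap.proj (R := ℝ) (φ := fun _ : Fin n => E3) (i + 1)) - ContinuousLinearMap.proj i with hL
  set D : PolySpace n →L[ℝ] (Fin n → ℝ) :=
    ContinuousLinearMap.pi (fun i => (innerSL ℝ (e i)).comp (L i)) with hDdef
  have hD : HasFDerivAt (fun w : PolySpace n => fun i : Fin n => ‖w (i + 1) - w i‖) D v := by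
    rw [hasFDerivAt_pi']
    intro i
    have hLi : HasFDerivAt (fun w : PolySpace n => w (i + 1) - w i) (L i) v :=
      (L i).hasFDerivAt
    have := hasFDerivAt_norm_of_unit hLi (hunit i)
    rw [hDdef, ContinuousLinearMap.proj_pi]
    exact this
  rw [hD.fderiv]
  have hDapp : ∀ (u : PolySpace n) (i : Fin n),
      D u i = inner ℝ (e i) (u (i + 1) - u i) := fun u i => rfl
  -- the "adjoint-like" map A
  set A : (Fin n → ℝ) →ₗ[ℝ] PolySpace n :=
    LinearMap.pi (fun j => ((LinearMap.proj (j - 1) : (Fin n → ℝ) →ₗ[ℝ] ℝ).smulRight (e (j - 1)))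
      - ((LinearMap.proj j : (Fin n → ℝ) →ₗ[ℝ] ℝ).smulRight (e j))) with hAdef
  have hAapp : ∀ (l : Fin n → ℝ) (j : Fin n), A l j = l (j - 1) • e (j - 1) - l j • e j :=
    fun l j => rfl
  set B : (Fin n → ℝ) →ₗ[ℝ] (Fin n → ℝ) := (D : PolySpace n →ₗ[ℝ] (Fin n → ℝ)).comp A with hBdef
  -- injectivity of B
  have hBinj : Function.Injective B := by
    rw [← LinearMap.ker_eq_bot, LinearMap.ker_eq_bot']
    intro l hl
    have hBl : ∀ i, (inner ℝ (e i) (A l (i + 1) - A l i) : ℝ) = 0 := by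
      intro i
      have : B l i = 0 := by rw [hl]; rfl
      rwa [hBdef, LinearMap.comp_apply, ContinuousLinearMap.coe_coe, hDapp] at this
    -- key sum identity
    have hsum : ∑ j, (inner ℝ (A l j) (A l j) : ℝ) = 0 := by
      have h1 : ∑ i, (inner ℝ (l i • e i) (A l (i + 1)) : ℝ)
          = ∑ j, (inner ℝ (l (j - 1) • e (j - 1)) (A l j) : ℝ) := by
        refine Fintype.sum_equiv (Equiv.addRight (1 : Fin n)) _ _ (fun i => ?_)
        simp [Equiv.coe_addRight]
      calc ∑ j, (inner ℝ (A l j) (A l j) : ℝ)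
          = ∑ j, ((inner ℝ (l (j - 1) • e (j - 1)) (A l j) : ℝ) - inner ℝ (l j • e j) (A l j)) := by
            refine Finset.sum_congr rfl (fun j _ => ?_)
            rw [hAapp, inner_sub_left]
        _ = ∑ i, ((inner ℝ (l i • e i) (A l (i + 1)) : ℝ) - inner ℝ (l i • e i) (A l i)) := by
            rw [Finset.sum_sub_distrib, Finset.sum_sub_distrib, h1]
        _ = ∑ i, l i * (inner ℝ (e i) (A l (i + 1) - A l i) : ℝ) := by
            refine Finset.sum_congr rfl (fun i _ => ?_)
            rw [inner_sub_right, real_inner_smul_left, real_inner_smul_left]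
            ring
        _ = 0 := by simp [hBl]
    have hA0 : ∀ j, A l j = 0 := by
      have := (Finset.sum_eq_zero_iff_of_nonneg
        (fun j _ => real_inner_self_nonneg (x := A l j))).1 hsum
      intro j
      exact inner_self_eq_zero.1 (this j (Finset.mem_univ j))
    -- from A l = 0 derive l = 0
    have hstep : ∀ j, l j • e j = l (j + 1) • e (j + 1) := by
      intro j
      have := hA0 (j + 1)
      rw [hAapp, sub_eq_zero, add_sub_cancel_right] at this
      exact this
    have hconst : ∀ j, l j • e j = l 0 • e 0 := by
      open Fin.NatCast in
      have key : ∀ k : ℕ, l ((k : Fin n)) • e ((k : Fin n)) = l 0 • e 0 := by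
        intro k
        induction k with
        | zero => simp
        | succ m ih =>
          have hcast : ((m + 1 : ℕ) : Fin n) = ((m : ℕ) : Fin n) + 1 := by push_cast; ring
          rw [hcast, ← hstep, ih]
      intro j
      have := key j.val
      simpa [Fin.cast_val_eq_self] using this
    by_cases h0 : ∃ j, l j = 0
    · obtain ⟨j0, hj0⟩ := h0
      have hc0 : l 0 • e 0 = 0 := by rw [← hconst j0, hj0, zero_smul]
      funext j
      have := hconst j
      rw [hc0, smul_eq_zero] at this
      exact this.resolve_right (hne j)
    · exfalso
      push_neg at h0
      have habs : ∀ j, |l j| = ‖l 0 • e 0‖ := by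
        intro j
        rw [← hconst j, norm_smul, hunit', mul_one, Real.norm_eq_abs]
      have hdich : ∀ j, e (j + 1) = e j ∨ e (j + 1) = -e j := by
        intro j
        have heq : |l (j + 1)| = |l j| := by rw [habs, habs]
        rcases abs_eq_abs.1 heq with h | h
        · left
          have := hstep j
          rw [h] at this
          exact (smul_right_injective E3 (h0 j) this.symm)
        · right
          have := hstep j
          rw [h, neg_smul, ← smul_neg] at this
          have := smul_right_injective E3 (h0 j) this
          rw [this]
          simp
      by_cases hflip : ∃ j, e (j + 1) = -e j
      · obtain ⟨j, hj⟩ := hflip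
        have hvv : v (j + 1 + 1) = v j := by
          have h : v (j + 1 + 1) - v (j + 1) = -(v (j + 1) - v j) := hj
          have h2 := sub_eq_iff_eq_add.mp h
          rw [h2]; abel
        have hmem : v j ∈ polyEdge v j ∩ polyEdge v (j + 1) := by
          constructor
          · exact left_mem_segment ℝ _ _
          · unfold polyEdge
            rw [hvv]
            exact right_mem_segment ℝ _ _
        rw [hv.2.1 j] at hmem
        exact hv.1 j hmem
      · push_neg at hflip
        have hsame : ∀ j, e (j + 1) = e j := fun j => (hdich j).resolve_right (hflip j)
        have hall : ∀ j, e j = e 0 := by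
          open Fin.NatCast in
          have key : ∀ k : ℕ, e ((k : Fin n)) = e 0 := by
            intro k
            induction k with
            | zero => simp
            | succ m ih =>
              have hcast : ((m + 1 : ℕ) : Fin n) = ((m : ℕ) : Fin n) + 1 := by push_cast; ring
              rw [hcast, hsame, ih]
          intro j
          have := key j.val
          simpa [Fin.cast_val_eq_self] using this
        have hsum0 : ∑ j, e j = 0 := by
          have h1 : ∑ j : Fin n, v (j + 1) = ∑ j : Fin n, v j :=
            Fintype.sum_equiv (Equiv.addRight (1 : Fin n)) _ _ (fun j => rfl)
          calc ∑ j, e j = ∑ j : Fin n, (v (j + 1) - v j) := rfl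
            _ = ∑ j : Fin n, v (j + 1) - ∑ j : Fin n, v j := Finset.sum_sub_distrib _ _
            _ = 0 := by rw [h1, sub_self]
        have : (n : ℝ) • e 0 = 0 := by
          rw [← hsum0, Finset.sum_congr rfl (fun j _ => hall j), Finset.sum_const,
            Finset.card_univ, Fintype.card_fin]
          exact Nat.cast_smul_eq_nsmul ℝ n (e 0)
        have hn0 : (n : ℝ) ≠ 0 := Nat.cast_ne_zero.2 (NeZero.ne n)
        exact hne 0 ((smul_eq_zero.1 this).resolve_left hn0)
  have hBsurj : Function.Surjective B := (LinearMap.injective_iff_surjective).1 hBinj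
  intro t
  obtain ⟨l, hl⟩ := hBsurj t
  exact ⟨A l, hl⟩
end
end
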